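/- The set S = {0, 1, ∞} with 1 + 1 = ∞, ∞ + x = ∞, and order 0 < 1 < ∞, is a simple Cu-semigroup satisfying ω-comparison but failing β-comparison: β(1, 1) = 0 yet 1 ≠ ∞. -/

import Mathlib

open scoped ENNReal

/-- Compact containment (way-below) relation: `a ≪ b` iff for every monotone sequence
with a supremum dominating `b`, some term dominates `a`. -/
def CuWayBelow {S : Type*} [Preorder S] (a b : S) : Prop :=
  ∀ c : ℕ → S, Monotone c → ∀ s : S, IsLUB (Set.range c) s → b ≤ s → ∃ n, a ≤ c n

/-- The axioms (O1)-(O4) of the category Cu, together with positivity of the order. -/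
structure CuSemigroup (S : Type*) [AddCommMonoid S] [PartialOrder S] [IsOrderedAddMonoid S] : Prop where
  pos : ∀ x : S, 0 ≤ x
  O1 : ∀ c : ℕ → S, Monotone c → ∃ s : S, IsLUB (Set.range c) s
  O2 : ∀ a : S, ∃ c : ℕ → S, (∀ n, CuWayBelow (c n) (c (n + 1))) ∧ IsLUB (Set.range c) a
  O3 : ∀ a' a b' b : S, CuWayBelow a' a → CuWayBelow b' b → CuWayBelow (a' + b') (a + b)
  O4 : ∀ c d : ℕ → S, Monotone c → Monotone d → ∀ s t : S,
      IsLUB (Set.range c) s → IsLUB (Set.range d) t →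
      IsLUB (Set.range fun n => c n + d n) (s + t)

/-- Simplicity: every nonzero element is full. -/
def CuSimple (S : Type*) [AddCommMonoid S] [PartialOrder S] [IsOrderedAddMonoid S] : Prop :=
  ∀ x y : S, x ≠ 0 → y ≠ 0 → ∀ y' : S, CuWayBelow y' y → ∃ n : ℕ, y' ≤ n • x

/-- A full sequence: increasing and absorbing every compactly contained element. -/
def CuFullSeq {S : Type*} [AddCommMonoid S] [PartialOrder S] [IsOrderedAddMonoid S] (x : ℕ → S) : Prop :=
  Monotone x ∧ ∀ z' z : S, CuWayBelow z' z → ∃ n m : ℕ, z' ≤ m • x n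

/-- The value `β(x,y) = inf { l/k : k ≥ 1, k•x ≤ l•y }`. -/
noncomputable def beta {W : Type*} [AddCommMonoid W] [PartialOrder W] [IsOrderedAddMonoid W] (x y : W) : ℝ :=
  sInf {r : ℝ | ∃ k l : ℕ, 0 < k ∧ k • x ≤ l • y ∧ r = (l : ℝ) / (k : ℝ)}

/-- ω-comparison. -/
def OmegaComparison (S : Type*) [AddCommMonoid S] [PartialOrder S] [IsOrderedAddMonoid S] : Prop :=
  ∀ (x' x : S) (y : ℕ → S), CuWayBelow x' x →
    (∀ j : ℕ, ∃ k : ℕ, 1 ≤ k ∧ (k + 1) • x ≤ k • y j) →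
    ∃ n : ℕ, x' ≤ ∑ j ∈ Finset.range n, y j

/-- β-comparison. -/
def BetaComparison (S : Type*) [AddCommMonoid S] [PartialOrder S] [IsOrderedAddMonoid S] : Prop :=
  ∀ x y : S, (∃ n : ℕ, x ≤ n • y) → beta x y = 0 → x ≤ y

/-- The semigroup `{0, 1, ∞}` with `1 + 1 = ∞`. -/
inductive S3 : Type
  | zero : S3
  | one : S3
  | inf : S3
  deriving DecidableEq

namespace S3

/-- Addition: sums of nonzero elements are `∞`. -/
def add : S3 → S3 → S3
  | zero, a => a
  | a, zero => a
  | _, _ => inf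

/-- Rank function inducing the linear order `0 < 1 < ∞`. -/
def rank : S3 → ℕ
  | zero => 0
  | one => 1
  | inf => 2

instance : Zero S3 := ⟨zero⟩
instance : Add S3 := ⟨add⟩

instance : AddCommMonoid S3 where
  zero_add a := by cases a <;> rfl
  add_zero a := by cases a <;> rfl
  add_assoc a b c := by cases a <;> cases b <;> cases c <;> rfl
  add_comm a b := by cases a <;> cases b <;> rfl
  nsmul := nsmulRec

instance : PartialOrder S3 :=
  PartialOrder.lift rank (fun a b h => by
    cases a <;> cases b <;> first | rfl | (exfalso; simp [rank] at h))

instance : DecidableRel ((· ≤ ·) : S3 → S3 → Prop) := fun a b => inferInstanceAs (Decidable (rank a ≤ rank b))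

instance : IsOrderedAddMonoid S3 where
  add_le_add_left a b h c := by
    cases a <;> cases b <;> cases c <;> revert h <;> decide

end S3

/-!
`S3` is finite, so monotone sequences stabilise: every element is compact and the Cu-axioms
reduce to order-theoretic trivialities. Any two nonzero elements add up to `∞`, which gives
simplicity and ω-comparison with two summands, and `k • 1 ≤ 2 • 1` for every `k` forces
`β(1, 1) ≤ 2 / k → 0`.
-/

theorem CuWayBelow.le {α : Type*} [Preorder α] {a b : α} (h : CuWayBelow a b) : a ≤ b := by
  obtain ⟨_, hn⟩ := h (fun _ => b) monotone_const b (by simp) le_rfl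
  exact hn

theorem Monotone.isLUB_range_of_forall_ge_eq {α : Type*} [Preorder α] {c : ℕ → α}
    (hc : Monotone c) {n : ℕ} (h : ∀ m, n ≤ m → c m = c n) : IsLUB (Set.range c) (c n) := by
  refine ⟨?_, fun b hb => hb ⟨n, rfl⟩⟩
  rintro _ ⟨k, rfl⟩
  rcases le_total k n with hk | hk
  · exact hc hk
  · exact (h k hk).le

section WellFoundedGT

variable {α : Type*} [PartialOrder α] [WellFoundedGT α]

theorem Monotone.exists_forall_ge_eq {c : ℕ → α} (hc : Monotone c) :
    ∃ n, ∀ m, n ≤ m → c m = c n := by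
  obtain ⟨n, hn⟩ := WellFoundedGT.monotone_chain_condition ⟨c, hc⟩
  exact ⟨n, fun m hm => (hn m hm).symm⟩

theorem cuWayBelow_iff_le {a b : α} : CuWayBelow a b ↔ a ≤ b := by
  refine ⟨CuWayBelow.le, fun hab c hc s hs hbs => ?_⟩
  obtain ⟨n, hn⟩ := hc.exists_forall_ge_eq
  exact ⟨n, hab.trans <| hbs.trans (hs.unique (hc.isLUB_range_of_forall_ge_eq hn)).le⟩

theorem cuSemigroup_of_wellFoundedGT {S : Type*} [AddCommMonoid S] [PartialOrder S]
    [IsOrderedAddMonoid S] [WellFoundedGT S] (hpos : ∀ x : S, 0 ≤ x) : CuSemigroup S where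
  pos := hpos
  O1 c hc := by
    obtain ⟨n, hn⟩ := hc.exists_forall_ge_eq
    exact ⟨c n, hc.isLUB_range_of_forall_ge_eq hn⟩
  O2 a := ⟨fun _ => a, fun _ => cuWayBelow_iff_le.2 le_rfl, by simp⟩
  O3 _ _ _ _ ha hb :=
    cuWayBelow_iff_le.2 <| add_le_add (cuWayBelow_iff_le.1 ha) (cuWayBelow_iff_le.1 hb)
  O4 c d hc hd s t hs ht := by
    obtain ⟨n₁, hn₁⟩ := hc.exists_forall_ge_eq
    obtain ⟨n₂, hn₂⟩ := hd.exists_forall_ge_eq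
    set N := max n₁ n₂
    have hcN : ∀ m, N ≤ m → c m = c N := fun m hm => by
      rw [hn₁ m (le_of_max_le_left hm), hn₁ N (le_max_left _ _)]
    have hdN : ∀ m, N ≤ m → d m = d N := fun m hm => by
      rw [hn₂ m (le_of_max_le_right hm), hn₂ N (le_max_right _ _)]
    rw [hs.unique (hc.isLUB_range_of_forall_ge_eq hcN),
      ht.unique (hd.isLUB_range_of_forall_ge_eq hdN)]
    exact (hc.add hd).isLUB_range_of_forall_ge_eq fun m hm => by rw [hcN m hm, hdN m hm]

end WellFoundedGT

theorem beta_eq_zero_of_forall_nsmul_le {W : Type*} [AddCommMonoid W] [PartialOrder W]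
    [IsOrderedAddMonoid W] {x y : W} (l : ℕ) (h : ∀ k, 0 < k → k • x ≤ l • y) :
    beta x y = 0 := by
  have hnonneg : ∀ r ∈ {r : ℝ | ∃ k l : ℕ, 0 < k ∧ k • x ≤ l • y ∧ r = (l : ℝ) / (k : ℝ)},
      0 ≤ r := by
    rintro _ ⟨k, l, -, -, rfl⟩
    positivity
  refine le_antisymm ?_ (Real.sInf_nonneg hnonneg)
  have hle : ∀ᶠ k : ℕ in Filter.atTop, beta x y ≤ l / k :=
    Filter.eventually_atTop.2 ⟨1, fun k hk => csInf_le ⟨0, hnonneg⟩ ⟨k, l, hk, h k hk, rfl⟩⟩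
  exact ge_of_tendsto (tendsto_const_div_atTop_nhds_zero_nat (l : ℝ)) hle

namespace S3

instance : Fintype S3 := ⟨{zero, one, inf}, fun x => by cases x <;> decide⟩

theorem zero_le (x : S3) : 0 ≤ x := by cases x <;> decide

theorem le_inf (x : S3) : x ≤ inf := by cases x <;> decide

theorem add_eq_inf {x y : S3} (hx : x ≠ 0) (hy : y ≠ 0) : x + y = inf := by
  cases x <;> cases y <;> first | rfl | exact absurd rfl ‹_›

theorem two_nsmul_eq_inf {x : S3} (hx : x ≠ 0) : 2 • x = inf := by
  rw [two_nsmul, add_eq_inf hx hx]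

theorem cuSimple : CuSimple S3 :=
  fun _ _ hx _ y' _ => ⟨2, two_nsmul_eq_inf hx ▸ le_inf y'⟩

theorem omegaComparison : OmegaComparison S3 := by
  intro x' x y hx' hy
  rw [cuWayBelow_iff_le] at hx'
  rcases eq_or_ne x 0 with rfl | hx
  · exact ⟨0, hx'⟩
  have hy_ne : ∀ j, y j ≠ 0 := by
    intro j hj
    obtain ⟨k, -, hk⟩ := hy j
    rw [hj, smul_zero] at hk
    exact hx <| le_antisymm ((le_self_nsmul (zero_le x) k.succ_ne_zero).trans hk) (zero_le x)
  refine ⟨2, ?_⟩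
  rw [Finset.sum_range_succ, Finset.sum_range_one, add_eq_inf (hy_ne 0) (hy_ne 1)]
  exact le_inf x'

end S3

/-- The semigroup `S = {0, 1, ∞}` (with `1 + 1 = ∞` and `0 < 1 < ∞`) is a simple
Cu-semigroup with largest element `∞`, satisfying ω-comparison but failing β-comparison:
`β(1,1) = 0` while `1 ≠ ∞`. -/
theorem stmt14 :
    S3.one + S3.one = S3.inf ∧
    (∀ s : S3, s ≤ S3.inf) ∧
    CuSemigroup S3 ∧
    CuSimple S3 ∧
    OmegaComparison S3 ∧
    beta S3.one S3.one = 0 ∧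
    S3.one ≠ S3.inf :=
  ⟨rfl, S3.le_inf, cuSemigroup_of_wellFoundedGT S3.zero_le, S3.cuSimple, S3.omegaComparison,
    beta_eq_zero_of_forall_nsmul_le 2 fun k _ =>
      (S3.two_nsmul_eq_inf (x := S3.one) (by decide)).symm ▸ S3.le_inf (k • S3.one),
    by decide⟩
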